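/- For any connected graph G of order n ≥ 2, the outer-connected domination number of the middle graph of the 2-corona G ∘ P₂ satisfies 2n + ⌈n/2⌉ ≤ γ̃_c(M(G ∘ P₂)) ≤ 3n. -/

import Mathlib

open SimpleGraph

/-- `S` is a dominating set of `H`: every vertex is in `S` or adjacent to a vertex of `S`. -/
def IsDomSet {V : Type*} (H : SimpleGraph V) (S : Set V) : Prop :=
  ∀ v : V, ∃ u ∈ S, u = v ∨ H.Adj u v

/-- The connected domination number: minimum size of a dominating set inducing a
connected subgraph. -/
noncomputable def connDomNum {V : Type*} (H : SimpleGraph V) : ℕ :=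
  sInf {k | ∃ S : Set V, IsDomSet H S ∧ (H.induce S).Connected ∧ S.ncard = k}

/-- The outer-connected domination number: minimum size of a dominating set whose
complement induces a connected subgraph. -/
noncomputable def outConnDomNum {V : Type*} (H : SimpleGraph V) : ℕ :=
  sInf {k | ∃ S : Set V, IsDomSet H S ∧ (H.induce Sᶜ).Connected ∧ S.ncard = k}

/-- The middle graph `M(G)`: vertices are `V(G) ∪ E(G)`; a vertex is adjacent to its
incident edges, and two edges are adjacent iff they share a vertex. -/
def middleGraph {V : Type*} (G : SimpleGraph V) : SimpleGraph (V ⊕ G.edgeSet) where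
  Adj x y :=
    match x, y with
    | Sum.inl _, Sum.inl _ => False
    | Sum.inl v, Sum.inr e => v ∈ (e : Sym2 V)
    | Sum.inr e, Sum.inl v => v ∈ (e : Sym2 V)
    | Sum.inr e, Sum.inr f => e ≠ f ∧ ∃ v, v ∈ (e : Sym2 V) ∧ v ∈ (f : Sym2 V)
  symm := by
    constructor
    rintro (v | e) (w | f) h
    · exact h.elim
    · exact h
    · exact h
    · exact ⟨Ne.symm h.1, h.2.imp fun v hv => ⟨hv.2, hv.1⟩⟩
  loopless := by
    constructor
    rintro (v | e) h
    · exact h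
    · exact h.1 rfl

/-- The edge cover number `ρ(G)`: minimum number of edges covering all vertices. -/
noncomputable def edgeCoverNum {V : Type*} (G : SimpleGraph V) : ℕ :=
  sInf {k | ∃ C : Set (Sym2 V), C ⊆ G.edgeSet ∧ (∀ v : V, ∃ e ∈ C, v ∈ e) ∧ C.ncard = k}

/-- The wheel graph with hub `none` and a cycle on `ZMod n` (so `n + 1` vertices). -/
def wheelGraph (n : ℕ) : SimpleGraph (Option (ZMod n)) where
  Adj x y :=
    match x, y with
    | none, none => False
    | none, some _ => True
    | some _, none => True
    | some i, some j => i ≠ j ∧ (i - j = 1 ∨ j - i = 1)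
  symm := by
    constructor
    rintro (_ | i) (_ | j) h
    · exact h.elim
    · trivial
    · trivial
    · exact ⟨h.1.symm, h.2.symm⟩
  loopless := by
    constructor
    rintro (_ | i) h
    · exact h
    · exact h.1 rfl

/-- The friendship graph `F n`: `n` triangles sharing the common vertex `none`. -/
def friendshipGraph (n : ℕ) : SimpleGraph (Option (Fin n × Fin 2)) where
  Adj x y :=
    match x, y with
    | none, none => False
    | none, some _ => True
    | some _, none => True
    | some (i, a), some (j, b) => i = j ∧ a ≠ b
  symm := by
    constructor
    rintro (_ | ⟨i, a⟩) (_ | ⟨j, b⟩) h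
    · exact h.elim
    · trivial
    · trivial
    · exact ⟨h.1.symm, h.2.symm⟩
  loopless := by
    constructor
    rintro (_ | ⟨i, a⟩) h
    · exact h
    · exact h.2 rfl

/-- The corona `G ∘ K₁`: each vertex `Sum.inl v` of `G` gets a pendant vertex `Sum.inr v`. -/
def corona {V : Type*} (G : SimpleGraph V) : SimpleGraph (V ⊕ V) where
  Adj x y :=
    match x, y with
    | Sum.inl v, Sum.inl w => G.Adj v w
    | Sum.inl v, Sum.inr w => v = w
    | Sum.inr v, Sum.inl w => v = w
    | Sum.inr _, Sum.inr _ => False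
  symm := by
    constructor
    rintro (v | v) (w | w) h
    · exact G.adj_symm h
    · exact h.symm
    · exact h.symm
    · exact h.elim
  loopless := by
    constructor
    rintro (v | v) h
    · exact G.irrefl h
    · exact h

/-- The 2-corona `G ∘ P₂`: each vertex `Sum.inl v` of `G` gets a pendant path
`Sum.inl v — Sum.inr (Sum.inl v) — Sum.inr (Sum.inr v)`. -/
def corona2 {V : Type*} (G : SimpleGraph V) : SimpleGraph (V ⊕ (V ⊕ V)) where
  Adj x y :=
    match x, y with
    | Sum.inl v, Sum.inl w => G.Adj v w
    | Sum.inl v, Sum.inr (Sum.inl w) => v = w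
    | Sum.inr (Sum.inl v), Sum.inl w => v = w
    | Sum.inr (Sum.inl v), Sum.inr (Sum.inr w) => v = w
    | Sum.inr (Sum.inr v), Sum.inr (Sum.inl w) => v = w
    | _, _ => False
  symm := by
    constructor
    rintro (v | v | v) (w | w | w) h
    · exact G.adj_symm h
    · exact h.symm
    · exact h.elim
    · exact h.symm
    · exact h.elim
    · exact h.symm
    · exact h.elim
    · exact h.symm
    · exact h.elim
  loopless := by
    constructor
    rintro (v | v | v) h
    · exact G.irrefl h
    · exact h
    · exact h

/-- The join `G + K̄ p` of `G` with the empty graph on `p` vertices. -/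
def joinEmpty {V : Type*} (G : SimpleGraph V) (p : ℕ) : SimpleGraph (V ⊕ Fin p) where
  Adj x y :=
    match x, y with
    | Sum.inl v, Sum.inl w => G.Adj v w
    | Sum.inl _, Sum.inr _ => True
    | Sum.inr _, Sum.inl _ => True
    | Sum.inr _, Sum.inr _ => False
  symm := by
    constructor
    rintro (v | v) (w | w) h
    · exact G.adj_symm h
    · trivial
    · trivial
    · exact h.elim
  loopless := by
    constructor
    rintro (v | v) h
    · exact G.irrefl h
    · exact h

/-!
Upper bound: the `3n` vertices of `G ∘ P₂` dominate the middle graph, and what is left is the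
line graph of the connected graph `G ∘ P₂`, which is connected.

Lower bound: write `v — mid v — tip v` for the path attached to `v`. In the middle graph `tip v`
has the single neighbour `outer v` (the edge `mid v — tip v`), and `mid v` has the two neighbours
`inner v`, `outer v`. Hence if the complement of an outer-connected dominating set `S` has at least
three elements, it cannot contain `tip v`, nor both `mid v` and `outer v`, so `S` contains two
elements of every pendant path. Each vertex `v` of `G` must moreover be dominated by itself or by
an edge at `v`; such a dominator serves at most two vertices of `G` and is not on a pendant path,
which gives `⌈n/2⌉` further elements. If the complement has at most two elements, `S` has at least
`5n - 2` of them anyway.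
-/

namespace SimpleGraph

variable {X : Type*} {H : SimpleGraph X}

theorem Connected.subset_of_induce {s A : Set X} (hs : (H.induce s).Connected) {x₀ : X}
    (hx₀s : x₀ ∈ s) (hx₀A : x₀ ∈ A) (hA : ∀ x ∈ A, ∀ y ∈ s, H.Adj x y → y ∈ A) : s ⊆ A := by
  intro y hys
  by_contra hyA
  obtain ⟨p⟩ := hs.preconnected ⟨x₀, hx₀s⟩ ⟨y, hys⟩
  obtain ⟨d, -, hd, hd'⟩ := p.exists_boundary_dart {z | (z : X) ∈ A} hx₀A hyA
  exact hd' (hA _ hd _ d.snd.2 d.adj)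

theorem outConnDomNum_le {S : Set X} (hS : IsDomSet H S) (hc : (H.induce Sᶜ).Connected) :
    outConnDomNum H ≤ S.ncard :=
  Nat.sInf_le ⟨S, hS, hc, rfl⟩

theorem le_outConnDomNum {k : ℕ} (hne : ∃ S, IsDomSet H S ∧ (H.induce Sᶜ).Connected)
    (h : ∀ S, IsDomSet H S → (H.induce Sᶜ).Connected → k ≤ S.ncard) : k ≤ outConnDomNum H := by
  obtain ⟨S, hS, hc⟩ := hne
  refine le_csInf ⟨_, S, hS, hc, rfl⟩ ?_
  rintro _ ⟨T, hT, hTc, rfl⟩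
  exact h T hT hTc

section middleGraph

variable {W : Type*} {G : SimpleGraph W}

theorem middleGraph_adj_inl {x : W ⊕ G.edgeSet} {v : W} :
    (middleGraph G).Adj x (Sum.inl v) ↔ ∃ e : G.edgeSet, x = Sum.inr e ∧ v ∈ (e : Sym2 W) := by
  rcases x with w | e <;> simp [middleGraph]

theorem isDomSet_middleGraph_range_inl : IsDomSet (middleGraph G) (Set.range Sum.inl) := by
  rintro (w | e)
  · exact ⟨_, Set.mem_range_self w, Or.inl rfl⟩
  · exact ⟨_, Set.mem_range_self _, Or.inr (Sym2.out_fst_mem (e : Sym2 W))⟩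

theorem middleGraph_reachable_edges (S : Set (W ⊕ G.edgeSet)) (hS : ∀ e, Sum.inr e ∈ S)
    {x y : W} (p : G.Walk x y) {e f : G.edgeSet} (hx : x ∈ (e : Sym2 W)) (hy : y ∈ (f : Sym2 W)) :
    ((middleGraph G).induce S).Reachable ⟨_, hS e⟩ ⟨_, hS f⟩ := by
  have share : ∀ {e f : G.edgeSet} {z : W}, z ∈ (e : Sym2 W) → z ∈ (f : Sym2 W) →
      ((middleGraph G).induce S).Reachable ⟨_, hS e⟩ ⟨_, hS f⟩ := by
    intro e f z hze hzf
    by_cases hef : e = f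
    · subst hef; rfl
    · exact Adj.reachable (show (middleGraph G).Adj (Sum.inr e) (Sum.inr f) from
        ⟨hef, z, hze, hzf⟩)
  induction p generalizing e with
  | nil => exact share hx hy
  | @cons x z y h q ih =>
    exact (share (f := ⟨s(x, z), h⟩) hx (Sym2.mem_mk_left x z)).trans
      (ih (Sym2.mem_mk_right x z) hy)

theorem connected_middleGraph_induce_compl_range_inl [Nonempty G.edgeSet] (hG : G.Connected) :
    ((middleGraph G).induce (Set.range Sum.inl)ᶜ).Connected := by
  have hS : ∀ e : G.edgeSet, Sum.inr e ∈ (Set.range (Sum.inl : W → W ⊕ G.edgeSet))ᶜ := by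
    rintro e ⟨w, hw⟩
    exact Sum.inl_ne_inr hw
  have : Nonempty ((Set.range (Sum.inl : W → W ⊕ G.edgeSet))ᶜ : Set _) :=
    ⟨⟨_, hS (Classical.arbitrary _)⟩⟩
  refine ⟨?_⟩
  rintro ⟨x | e, hx⟩ ⟨y | f, hy⟩
  · exact absurd (Set.mem_range_self x) hx
  · exact absurd (Set.mem_range_self x) hx
  · exact absurd (Set.mem_range_self y) hy
  · obtain ⟨p⟩ := hG.preconnected (e : Sym2 W).out.1 (f : Sym2 W).out.1
    exact middleGraph_reachable_edges _ hS p (Sym2.out_fst_mem _) (Sym2.out_fst_mem _)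

end middleGraph

end SimpleGraph

theorem Sym2.ncard_setOf_mem_le_two {α β : Type*} {f : α → β} (hf : f.Injective) (z : Sym2 β) :
    {a | f a ∈ z}.ncard ≤ 2 := by
  induction z using Sym2.ind with
  | _ x y =>
    calc {a | f a ∈ s(x, y)}.ncard ≤ ({x, y} : Set β).ncard :=
          Set.ncard_le_ncard_of_injOn f (fun a ha => Sym2.mem_iff.mp ha) hf.injOn
      _ ≤ 2 := (Set.ncard_insert_le _ _).trans (by simp)

theorem connected_corona2 {V : Type*} {G : SimpleGraph V} (hG : G.Connected) :
    (corona2 G).Connected := by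
  obtain ⟨v₀⟩ := hG.nonempty
  refine (connected_iff_exists_forall_reachable _).mpr ⟨.inl v₀, ?_⟩
  have core : ∀ v, (corona2 G).Reachable (.inl v₀) (.inl v) := fun v =>
    (hG.preconnected v₀ v).map ⟨Sum.inl, fun h => h⟩
  have mid : ∀ v, (corona2 G).Reachable (.inl v₀) (.inr (.inl v)) := fun v =>
    (core v).trans (Adj.reachable (show (corona2 G).Adj (.inl v) (.inr (.inl v)) from rfl))
  rintro (v | v | v)
  · exact core v
  · exact mid v
  · exact (mid v).trans
      (Adj.reachable (show (corona2 G).Adj (.inr (.inl v)) (.inr (.inr v)) from rfl))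

namespace Corona2

variable {V : Type*} (G : SimpleGraph V)

def innerEdge (v : V) : (corona2 G).edgeSet :=
  ⟨s(.inl v, .inr (.inl v)), (corona2 G).mem_edgeSet.mpr rfl⟩

def outerEdge (v : V) : (corona2 G).edgeSet :=
  ⟨s(.inr (.inl v), .inr (.inr v)), (corona2 G).mem_edgeSet.mpr rfl⟩

variable {G}

theorem eq_innerEdge_or_outerEdge {v : V} {g : (corona2 G).edgeSet}
    (h : Sum.inr (Sum.inl v) ∈ (g : Sym2 (V ⊕ (V ⊕ V)))) :
    g = innerEdge G v ∨ g = outerEdge G v := by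
  obtain ⟨y, hy⟩ := Sym2.mem_iff_exists.mp h
  have hadj : (corona2 G).Adj (.inr (.inl v)) y := (corona2 G).mem_edgeSet.mp (hy ▸ g.2)
  rcases y with w | w | w
  · obtain rfl : v = w := hadj
    exact .inl (Subtype.ext (hy.trans Sym2.eq_swap))
  · exact hadj.elim
  · obtain rfl : v = w := hadj
    exact .inr (Subtype.ext hy)

theorem eq_outerEdge {v : V} {g : (corona2 G).edgeSet}
    (h : Sum.inr (Sum.inr v) ∈ (g : Sym2 (V ⊕ (V ⊕ V)))) : g = outerEdge G v := by
  obtain ⟨y, hy⟩ := Sym2.mem_iff_exists.mp h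
  have hadj : (corona2 G).Adj (.inr (.inr v)) y := (corona2 G).mem_edgeSet.mp (hy ▸ g.2)
  rcases y with w | w | w
  · exact hadj.elim
  · obtain rfl : v = w := hadj
    exact Subtype.ext (hy.trans Sym2.eq_swap)
  · exact hadj.elim

variable (G)

abbrev core (v : V) : (V ⊕ (V ⊕ V)) ⊕ (corona2 G).edgeSet := .inl (.inl v)
abbrev mid (v : V) : (V ⊕ (V ⊕ V)) ⊕ (corona2 G).edgeSet := .inl (.inr (.inl v))
abbrev tip (v : V) : (V ⊕ (V ⊕ V)) ⊕ (corona2 G).edgeSet := .inl (.inr (.inr v))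
abbrev inner (v : V) : (V ⊕ (V ⊕ V)) ⊕ (corona2 G).edgeSet := .inr (innerEdge G v)
abbrev outer (v : V) : (V ⊕ (V ⊕ V)) ⊕ (corona2 G).edgeSet := .inr (outerEdge G v)

def coreDominators : Set ((V ⊕ (V ⊕ V)) ⊕ (corona2 G).edgeSet) :=
  {x | ∃ w, x = core G w ∨ (middleGraph (corona2 G)).Adj x (core G w)}

variable {G}

theorem eq_outer_of_adj_tip {v : V} {x} (h : (middleGraph (corona2 G)).Adj x (tip G v)) :
    x = outer G v := by
  obtain ⟨g, rfl, hg⟩ := middleGraph_adj_inl.mp h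
  rw [eq_outerEdge hg]

theorem eq_inner_or_outer_of_adj_mid {v : V} {x}
    (h : (middleGraph (corona2 G)).Adj x (mid G v)) : x = inner G v ∨ x = outer G v := by
  obtain ⟨g, rfl, hg⟩ := middleGraph_adj_inl.mp h
  rcases eq_innerEdge_or_outerEdge hg with rfl | rfl <;> simp

theorem eq_mid_or_tip_or_inner_of_adj_outer {v : V} {x}
    (h : (middleGraph (corona2 G)).Adj x (outer G v)) :
    x = mid G v ∨ x = tip G v ∨ x = inner G v := by
  rcases x with w | g
  · rcases Sym2.mem_iff.mp h with rfl | rfl <;> simp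
  · obtain ⟨hne, z, hzg, hzf⟩ := h
    rcases Sym2.mem_iff.mp hzf with rfl | rfl
    · rcases eq_innerEdge_or_outerEdge hzg with rfl | rfl
      · simp
      · exact absurd rfl hne
    · exact absurd (eq_outerEdge hzg) hne

theorem mid_notMem_coreDominators (v : V) : mid G v ∉ coreDominators G := by
  simp [coreDominators, middleGraph_adj_inl]

theorem tip_notMem_coreDominators (v : V) : tip G v ∉ coreDominators G := by
  simp [coreDominators, middleGraph_adj_inl]

theorem outer_notMem_coreDominators (v : V) : outer G v ∉ coreDominators G := by
  simp [coreDominators, middleGraph_adj_inl, outerEdge]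

theorem ncard_setOf_dominated_core_le_two (u : (V ⊕ (V ⊕ V)) ⊕ (corona2 G).edgeSet) :
    {w | u = core G w ∨ (middleGraph (corona2 G)).Adj u (core G w)}.ncard ≤ 2 := by
  rcases u with c | g
  · convert Sym2.ncard_setOf_mem_le_two Sum.inl_injective s(c, c) using 2 with w
    simp [middleGraph, eq_comm]
  · convert Sym2.ncard_setOf_mem_le_two Sum.inl_injective (g : Sym2 (V ⊕ (V ⊕ V))) using 2 with w
    simp [middleGraph]

variable {S : Set ((V ⊕ (V ⊕ V)) ⊕ (corona2 G).edgeSet)}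

theorem five_mul_card_le_card_middleGraph [Finite V] :
    5 * Nat.card V ≤ Nat.card ((V ⊕ (V ⊕ V)) ⊕ (corona2 G).edgeSet) := by
  have hedge : Function.Injective (Sum.elim (innerEdge G) (outerEdge G)) := by
    refine Function.Injective.sumElim ?_ ?_ ?_ <;>
      simp [Function.Injective, innerEdge, outerEdge]
  have := Nat.card_le_card_of_injective (Sum.map (id : V ⊕ (V ⊕ V) → V ⊕ (V ⊕ V)) _)
    (Sum.map_injective.mpr ⟨Function.injective_id, hedge⟩)
  simp only [Nat.card_sum] at this ⊢
  omega

theorem card_le_two_mul_ncard_inter_coreDominators [Finite V]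
    (hS : IsDomSet (middleGraph (corona2 G)) S) :
    Nat.card V ≤ 2 * (S ∩ coreDominators G).ncard := by
  classical
  have := Fintype.ofFinite V
  choose φ hφS hφ using fun v => hS (core G v)
  have hfibre : ∀ u ∈ Finset.univ.image φ, (Finset.univ.filter (φ · = u)).card ≤ 2 := by
    intro u _
    rw [← Set.ncard_coe_finset]
    refine (Set.ncard_le_ncard fun v hv => ?_).trans (ncard_setOf_dominated_core_le_two u)
    simp only [Finset.coe_filter, Finset.mem_univ, true_and, Set.mem_ofPred_eq] at hv
    exact hv ▸ hφ v
  calc Nat.card V = (Finset.univ : Finset V).card := by simp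
    _ ≤ 2 * (Finset.univ.image φ).card := Finset.card_le_mul_card_image _ 2 hfibre
    _ = 2 * (Set.range φ).ncard := by simp [← Set.ncard_coe_finset]
    _ ≤ 2 * (S ∩ coreDominators G).ncard := by
      gcongr
      · exact Set.toFinite _
      · rintro _ ⟨v, rfl⟩
        exact ⟨hφS v, v, hφ v⟩

theorem le_ncard_of_pendant_mem [Finite V] (hS : IsDomSet (middleGraph (corona2 G)) S)
    (htip : ∀ v, tip G v ∈ S) (hmid : ∀ v, mid G v ∈ S ∨ outer G v ∈ S) :
    2 * Nat.card V + (Nat.card V + 1) / 2 ≤ S.ncard := by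
  classical
  let ψ : V ⊕ V → (V ⊕ (V ⊕ V)) ⊕ (corona2 G).edgeSet :=
    Sum.elim (tip G) fun v => if mid G v ∈ S then mid G v else outer G v
  have hψ : ψ.Injective := by
    refine Function.Injective.sumElim (by simp [Function.Injective]) ?_ ?_
    · intro v w h
      dsimp only at h
      split_ifs at h <;> simp_all [outerEdge]
    · intro v w
      split_ifs <;> simp
  have hψS : Set.range ψ ⊆ S \ coreDominators G := by
    rintro _ ⟨v | v, rfl⟩
    · exact ⟨htip v, tip_notMem_coreDominators v⟩
    · by_cases h : mid G v ∈ S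
      · simpa [ψ, h] using mid_notMem_coreDominators v
      · simpa [ψ, h] using ⟨(hmid v).resolve_left h, outer_notMem_coreDominators v⟩
  have hsplit : (Set.range ψ).ncard + (S ∩ coreDominators G).ncard ≤ S.ncard := by
    rw [← Set.ncard_union_eq (Set.disjoint_of_subset_left hψS Set.disjoint_sdiff_inter)]
    exact Set.ncard_le_ncard (Set.union_subset (hψS.trans Set.sdiff_subset) Set.inter_subset_left)
  have hcore := card_le_two_mul_ncard_inter_coreDominators hS
  rw [Set.ncard_range_of_injective hψ, Nat.card_sum] at hsplit
  omega

variable (hS : IsDomSet (middleGraph (corona2 G)) S)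
  (hc : ((middleGraph (corona2 G)).induce Sᶜ).Connected)
include hS hc

theorem ncard_compl_le_one_of_tip_notMem {v : V} (hv : tip G v ∉ S) : Sᶜ.ncard ≤ 1 := by
  have houter : outer G v ∈ S := by
    obtain ⟨u, huS, rfl | hu⟩ := hS (tip G v)
    · exact absurd huS hv
    · rwa [eq_outer_of_adj_tip hu] at huS
  have hsub : Sᶜ ⊆ {tip G v} := hc.subset_of_induce hv rfl fun x hx y hy hxy => by
    rw [Set.mem_singleton_iff.mp hx] at hxy
    exact absurd (eq_outer_of_adj_tip hxy.symm ▸ houter) hy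
  exact (Set.ncard_le_ncard hsub).trans (Set.ncard_singleton _).le

theorem ncard_compl_le_two_of_mid_notMem_of_outer_notMem {v : V} (hm : mid G v ∉ S)
    (ho : outer G v ∉ S) : Sᶜ.ncard ≤ 2 := by
  have hinner : inner G v ∈ S := by
    obtain ⟨u, huS, rfl | hu⟩ := hS (mid G v)
    · exact absurd huS hm
    · rcases eq_inner_or_outer_of_adj_mid hu with rfl | rfl
      · exact huS
      · exact absurd huS ho
  have htip : tip G v ∈ S := by
    obtain ⟨u, huS, rfl | hu⟩ := hS (tip G v)
    · exact huS
    · exact absurd (eq_outer_of_adj_tip hu ▸ huS) ho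
  have hsub : Sᶜ ⊆ {mid G v, outer G v} := hc.subset_of_induce hm (.inl rfl) fun x hx y hy hxy => by
    rcases hx with rfl | rfl
    · rcases eq_inner_or_outer_of_adj_mid hxy.symm with rfl | rfl
      · exact absurd hinner hy
      · exact .inr rfl
    · rcases eq_mid_or_tip_or_inner_of_adj_outer hxy.symm with rfl | rfl | rfl
      · exact .inl rfl
      · exact absurd htip hy
      · exact absurd hinner hy
  exact (Set.ncard_le_ncard hsub).trans ((Set.ncard_insert_le _ _).trans (by simp))

theorem le_ncard_of_isDomSet [Finite V] : 2 * Nat.card V + (Nat.card V + 1) / 2 ≤ S.ncard := by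
  by_cases hsmall : Sᶜ.ncard ≤ 2
  · have := five_mul_card_le_card_middleGraph (G := G)
    have := Set.ncard_add_ncard_compl S
    omega
  refine le_ncard_of_pendant_mem hS (fun v => ?_) (fun v => ?_)
  · by_contra hv
    have := ncard_compl_le_one_of_tip_notMem hS hc hv
    omega
  · by_contra! hv
    have := ncard_compl_le_two_of_mid_notMem_of_outer_notMem hS hc hv.1 hv.2
    omega

end Corona2

theorem stmt12_general {V : Type*} [Fintype V] (G : SimpleGraph V) (n : ℕ)
    (hn : Fintype.card V = n) (hc : G.Connected) :
    2 * n + (n + 1) / 2 ≤ outConnDomNum (middleGraph (corona2 G)) ∧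
      outConnDomNum (middleGraph (corona2 G)) ≤ 3 * n := by
  rw [← hn, ← Nat.card_eq_fintype_card]
  have : Nonempty (corona2 G).edgeSet := ⟨Corona2.innerEdge G hc.nonempty.some⟩
  have hdom := isDomSet_middleGraph_range_inl (G := corona2 G)
  have hconn := connected_middleGraph_induce_compl_range_inl (connected_corona2 hc)
  refine ⟨le_outConnDomNum ⟨_, hdom, hconn⟩ fun S hS hSc => Corona2.le_ncard_of_isDomSet hS hSc, ?_⟩
  calc outConnDomNum _ ≤ (Set.range Sum.inl).ncard := outConnDomNum_le hdom hconn
    _ = 3 * Nat.card V := by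
      rw [Set.ncard_range_of_injective Sum.inl_injective, Nat.card_sum, Nat.card_sum]
      ring

theorem stmt12 {V : Type*} [Fintype V] (G : SimpleGraph V) (n : ℕ)
    (hn : Fintype.card V = n) (h2 : 2 ≤ n) (hc : G.Connected) :
    2 * n + (n + 1) / 2 ≤ outConnDomNum (middleGraph (corona2 G)) ∧
      outConnDomNum (middleGraph (corona2 G)) ≤ 3 * n :=
  stmt12_general G n hn hc
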